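/- arXiv:2105.02910 — 2 statements merged into one kernel-verified Lean document; each statement's English description precedes it below -/
import Mathlib

section
/- Let G be a 3-edge-connected graph with DFS tree T, and let {(u,p(u)), (v,p(v)), e} be a 3-edge cut of G where e is a back-edge and u ≠ v. Then u and v are related as ancestor and descendant in T. -/
variable {V E : Type}

/-- Reachability in the multigraph with edge-endpoint map `ends`,
avoiding (i.e. after deleting) the edges in `S`. -/
def Reach (ends : E → V × V) (S : Set E) : V → V → Prop :=
  Relation.ReflTransGen (fun a b => ∃ e, e ∉ S ∧ (ends e = (a, b) ∨ ends e = (b, a)))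

/-- The multigraph is connected. -/
def Connected (ends : E → V × V) : Prop := ∀ u v : V, Reach ends ∅ u v

/-- `u` and `v` are `k`-edge-connected: no set of at most `k - 1` edges separates them. -/
def KConn (ends : E → V × V) (k : ℕ) (u v : V) : Prop :=
  ∀ S : Finset E, S.card ≤ k - 1 → Reach ends (↑S) u v

/-- The multigraph is `k`-edge-connected: no edge cut of size less than `k`. -/
def GraphKConn (ends : E → V × V) (k : ℕ) : Prop :=
  ∀ S : Finset E, S.card < k → ∀ u v : V, Reach ends (↑S) u v

/-- `S` is an edge cut: removing it disconnects the graph. -/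
def IsCutSet (ends : E → V × V) (S : Set E) : Prop :=
  ∃ u v : V, ¬ Reach ends S u v

/-- A (candidate) DFS tree on the multigraph `ends : E → V × V`: a root, a parent
function, a choice of a tree edge for each non-root vertex, and a preorder numbering. -/
structure DFSTree (V E : Type) where
  ends : E → V × V
  root : V
  parent : V → V
  treeEdge : V → E
  pre : V → ℕ

namespace DFSTree

variable (t : DFSTree V E)

/-- `t.Anc a b` : `a` is an ancestor of `b` (every vertex is an ancestor of itself). -/
def Anc (a b : V) : Prop :=
  Relation.ReflTransGen (fun x y => x ≠ t.root ∧ y = t.parent x) b a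

/-- `a` is a proper ancestor of `b`. -/
def ProperAnc (a b : V) : Prop := t.Anc a b ∧ a ≠ b

def IsTreeEdge (e : E) : Prop := ∃ v, v ≠ t.root ∧ e = t.treeEdge v

/-- The set `B(v)`: back-edges `(x, y)` with `x` a descendant of `v` and `y` a
proper ancestor of `v`. -/
def B (v : V) : Set E :=
  {e | ¬ t.IsTreeEdge e ∧ t.Anc v (t.ends e).1 ∧ t.ProperAnc (t.ends e).2 v}

/-- `m` is the nearest common ancestor of the set `S` of vertices. -/
def IsNCA (S : Set V) (m : V) : Prop :=
  (∀ x ∈ S, t.Anc m x) ∧ ∀ m' : V, (∀ x ∈ S, t.Anc m' x) → t.Anc m' m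

/-- `m = M(v)`: the nearest common ancestor of all lower ends of back-edges in `B(v)`. -/
def IsM (v m : V) : Prop := t.IsNCA {x | ∃ e ∈ t.B v, (t.ends e).1 = x} m

/-- `h = high(v)`: the highest (in preorder) upper end of a back-edge in `B(v)`. -/
def IsHigh (v h : V) : Prop :=
  (∃ e ∈ t.B v, (t.ends e).2 = h) ∧ ∀ e ∈ t.B v, t.pre (t.ends e).2 ≤ t.pre h

/-- `l = low(v)`: the lowest (in preorder) upper end of a back-edge in `B(v)`. -/
def IsLow (v l : V) : Prop :=
  (∃ e ∈ t.B v, (t.ends e).2 = l) ∧ ∀ e ∈ t.B v, t.pre l ≤ t.pre (t.ends e).2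

/-- `v` and `w` have the same `M`-value. -/
def SameM (v w : V) : Prop := ∃ m, t.IsM v m ∧ t.IsM w m

/-- `n = nextM(v)`: the greatest vertex smaller than `v` with the same `M`-value. -/
def IsNextM (v n : V) : Prop :=
  t.pre n < t.pre v ∧ t.SameM v n ∧
    ∀ z, t.pre z < t.pre v → t.SameM v z → t.pre z ≤ t.pre n

/-- `l = lastM(v)`: the smallest vertex with the same `M`-value as `v`. -/
def IsLastM (v l : V) : Prop :=
  t.SameM v l ∧ ∀ z, t.SameM v z → t.pre l ≤ t.pre z

/-- `t` really is a DFS spanning tree of the connected multigraph `ends`. -/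
structure IsDFS : Prop where
  conn : Connected t.ends
  parent_root : t.parent t.root = t.root
  tree_ends : ∀ v, v ≠ t.root → t.ends (t.treeEdge v) = (v, t.parent v)
  treeEdge_inj : ∀ v w, v ≠ t.root → w ≠ t.root → t.treeEdge v = t.treeEdge w → v = w
  back : ∀ e, ¬ t.IsTreeEdge e → t.Anc (t.ends e).2 (t.ends e).1
  pre_inj : Function.Injective t.pre
  pre_mono : ∀ a b, t.Anc a b → t.pre a ≤ t.pre b
  pre_interval : ∀ a b : V,
    t.pre a ≤ t.pre b → t.pre b < t.pre a + {x | t.Anc a x}.ncard → t.Anc a b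

end DFSTree

/-!
Suppose `u` and `v` are unrelated and let `S = {(u, p(u)), (v, p(v)), e}`; it suffices to
reconnect the two ends of every edge of `S` in `G - S`. A tree path survives in `G - S`
unless it climbs through `u` or `v`. Since `|B(u)| ≥ 2`, some back-edge `f ≠ e` leaves the
subtree of `u`: from any descendant of `u`, climb to `u`, go down to the lower end of `f`,
take `f` to a proper ancestor of `u`, and from there reach any ancestor of `u` along the
tree (that path meets neither `u` nor `v`). This reconnects `(u, p(u))`, and `e` when
`e ∈ B(u)`; symmetrically for `v`; otherwise `e` is reconnected along its own tree path.
-/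

section Reach

variable {ends : E → V × V} {S : Set E} {x y : V}

theorem Reach.symm (h : Reach ends S x y) : Reach ends S y x :=
  Relation.ReflTransGen.mono (fun _ _ ⟨f, hf, hends⟩ => ⟨f, hf, hends.symm⟩) _ _
    (Relation.ReflTransGen.swap _ _ h)

theorem Reach.edge {f : E} (hf : f ∉ S) : Reach ends S (ends f).1 (ends f).2 :=
  .single ⟨f, hf, .inl rfl⟩

theorem Reach.of_reach_ends (hS : ∀ f ∈ S, Reach ends S (ends f).1 (ends f).2)
    (h : Reach ends ∅ x y) : Reach ends S x y := by
  refine Relation.reflTransGen_closed (fun a b ⟨f, _, hends⟩ => ?_) _ _ h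
  by_cases hfS : f ∈ S
  · have hf := hS f hfS
    rcases hends with hends | hends <;> rw [hends] at hf
    exacts [hf, hf.symm]
  · exact .single ⟨f, hfS, hends⟩

theorem Reach.imp_of_edges_not_mem {P : V → Prop}
    (hP : ∀ f ∉ S, (P (ends f).1 ↔ P (ends f).2)) (h : Reach ends S x y) (hx : P x) : P y := by
  induction h with
  | refl => exact hx
  | tail _ hstep ih =>
    obtain ⟨f, hf, hends | hends⟩ := hstep <;> have hPf := hP f hf <;> rw [hends] at hPf
    exacts [hPf.mp ih, hPf.mpr ih]

end Reach

namespace DFSTree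

variable {t : DFSTree V E} {a b c : V}

theorem Anc.trans (h₁ : t.Anc a b) (h₂ : t.Anc b c) : t.Anc a c :=
  Relation.ReflTransGen.trans h₂ h₁

theorem anc_parent (ha : a ≠ t.root) : t.Anc (t.parent a) a :=
  .single ⟨ha, rfl⟩

theorem Anc.antisymm (ht : t.IsDFS) (h₁ : t.Anc a b) (h₂ : t.Anc b a) : a = b :=
  ht.pre_inj (le_antisymm (ht.pre_mono a b h₁) (ht.pre_mono b a h₂))

theorem Anc.anc_parent (h : t.Anc a b) (hne : b ≠ a) : t.Anc a (t.parent b) := by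
  rcases Relation.ReflTransGen.cases_head h with h | ⟨_, ⟨_, rfl⟩, hrest⟩
  exacts [absurd h hne, hrest]

theorem ProperAnc.ne_root (h : t.ProperAnc a b) : b ≠ t.root := by
  rintro rfl
  rcases Relation.ReflTransGen.cases_head h.1 with h' | ⟨_, ⟨hr, _⟩, _⟩
  exacts [h.2 h'.symm, hr rfl]

theorem Anc.total (ha : t.Anc a c) (hb : t.Anc b c) : t.Anc a b ∨ t.Anc b a := by
  induction ha using Relation.ReflTransGen.head_induction_on with
  | refl => exact .inr hb
  | @head c c' hstep hrest ih =>
    rcases Relation.ReflTransGen.cases_head hb with rfl | ⟨d, hd, hb'⟩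
    · exact .inl (Relation.ReflTransGen.head hstep hrest)
    · rw [hd.2, ← hstep.2] at hb'
      exact ih hb'

end DFSTree

namespace DFSTree.IsDFS

variable {t : DFSTree V E} {u v w x y z : V} {e : E} {S : Set E}

theorem reach_of_anc (ht : t.IsDFS) (hzx : t.Anc z x)
    (hS : ∀ w, t.Anc w x → t.ProperAnc z w → t.treeEdge w ∉ S) : Reach t.ends S x z := by
  induction hzx using Relation.ReflTransGen.head_induction_on with
  | refl => exact .refl
  | @head x y hstep hrest ih =>
    by_cases hxz : x = z
    · subst hxz; exact .refl
    obtain ⟨hx, rfl⟩ := hstep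
    have hzx : t.ProperAnc z x := ⟨Relation.ReflTransGen.head ⟨hx, rfl⟩ hrest, Ne.symm hxz⟩
    have hedge : Reach t.ends S x (t.parent x) := by
      simpa only [ht.tree_ends x hx] using Reach.edge (ends := t.ends) (hS x .refl hzx)
    exact hedge.trans (ih fun w hw => hS w (hw.trans (anc_parent hx)))

theorem anc_fst_iff_anc_snd (ht : t.IsDFS) {f : E} (hf : f ≠ t.treeEdge w)
    (hfB : f ∉ t.B w) : t.Anc w (t.ends f).1 ↔ t.Anc w (t.ends f).2 := by
  by_cases htree : t.IsTreeEdge f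
  · obtain ⟨w', hw', rfl⟩ := htree
    rw [ht.tree_ends w' hw']
    exact ⟨fun h => h.anc_parent (by rintro rfl; exact hf rfl), fun h => h.trans (anc_parent hw')⟩
  · have hback := ht.back f htree
    refine ⟨fun h => ?_, fun h => h.trans hback⟩
    rcases h.total hback with h' | h'
    · exact h'
    · by_cases hw : (t.ends f).2 = w
      · rw [hw]; exact .refl
      · exact absurd ⟨htree, h, h', hw⟩ hfB

theorem exists_mem_B_ne (ht : t.IsDFS) (h3 : GraphKConn t.ends 3)
    (hy : t.ProperAnc y w) (e : E) : ∃ f ∈ t.B w, f ≠ e := by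
  classical
  by_contra! hB
  have hreach := h3 {t.treeEdge w, e} (Finset.card_le_two.trans_lt (by norm_num)) w y
  have hwy : t.Anc w y := hreach.imp_of_edges_not_mem (P := t.Anc w) (fun f hf => ?_) .refl
  · exact hy.2 (hy.1.antisymm ht hwy)
  · simp only [Finset.coe_insert, Finset.coe_singleton, Set.mem_insert_iff,
      Set.mem_singleton_iff, not_or] at hf
    exact ht.anc_fst_iff_anc_snd hf.1 fun hfB => hf.2 (hB f hfB)

theorem eq_or_eq_of_treeEdge_mem (ht : t.IsDFS) (hu : u ≠ t.root) (hv : v ≠ t.root)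
    (hback : ¬ t.IsTreeEdge e) (hw : w ≠ t.root)
    (h : t.treeEdge w ∈ ({t.treeEdge u, t.treeEdge v, e} : Set E)) : w = u ∨ w = v := by
  rcases h with h | h | h
  · exact .inl (ht.treeEdge_inj w u hw hu h)
  · exact .inr (ht.treeEdge_inj w v hw hv h)
  · exact absurd ⟨w, hw, h.symm⟩ hback

theorem reach_cut_of_anc (ht : t.IsDFS) (hu : u ≠ t.root) (hv : v ≠ t.root)
    (hback : ¬ t.IsTreeEdge e) (hzx : t.Anc z x) (hux : ¬ (t.Anc u x ∧ t.ProperAnc z u))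
    (hvx : ¬ (t.Anc v x ∧ t.ProperAnc z v)) :
    Reach t.ends {t.treeEdge u, t.treeEdge v, e} x z :=
  ht.reach_of_anc hzx fun w hwx hzw hmem => by
    rcases ht.eq_or_eq_of_treeEdge_mem hu hv hback hzw.ne_root hmem with rfl | rfl
    exacts [hux ⟨hwx, hzw⟩, hvx ⟨hwx, hzw⟩]

theorem reach_cut_of_properAnc (ht : t.IsDFS) (hu : u ≠ t.root) (hv : v ≠ t.root)
    (hback : ¬ t.IsTreeEdge e) (hvu : ¬ t.Anc v u) {c d : V} (hc : t.ProperAnc c u)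
    (hd : t.ProperAnc d u) : Reach t.ends {t.treeEdge u, t.treeEdge v, e} c d := by
  have down {c d : V} (hc : t.ProperAnc c u) (hdc : t.Anc d c) :
      Reach t.ends {t.treeEdge u, t.treeEdge v, e} c d :=
    ht.reach_cut_of_anc hu hv hback hdc (fun h => hc.2 (hc.1.antisymm ht h.1))
      (fun h => hvu (h.1.trans hc.1))
  rcases hc.1.total hd.1 with h | h
  exacts [(down hd h).symm, down hc h]

theorem reach_cut_of_anc_of_anc (ht : t.IsDFS) (h3 : GraphKConn t.ends 3)
    (hu : u ≠ t.root) (hv : v ≠ t.root) (hback : ¬ t.IsTreeEdge e)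
    (huv : ¬ t.Anc u v) (hvu : ¬ t.Anc v u) (hux : t.Anc u x) (hyu : t.Anc y u) :
    Reach t.ends {t.treeEdge u, t.treeEdge v, e} x y := by
  have up {x : V} (hux : t.Anc u x) : Reach t.ends {t.treeEdge u, t.treeEdge v, e} x u :=
    ht.reach_cut_of_anc hu hv hback hux (fun h => h.2.2 rfl) (fun h => huv h.2.1)
  refine (up hux).trans ?_
  by_cases hy : y = u
  · subst hy; exact .refl
  obtain ⟨f, ⟨hf, hfu, hfy⟩, hfe⟩ := ht.exists_mem_B_ne h3 ⟨hyu, hy⟩ e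
  have hfS : f ∉ ({t.treeEdge u, t.treeEdge v, e} : Set E) := by
    rintro (h | h | h)
    exacts [hf ⟨u, hu, h⟩, hf ⟨v, hv, h⟩, hfe h]
  exact ((up hfu).symm.trans (Reach.edge hfS)).trans
    (ht.reach_cut_of_properAnc hu hv hback hvu hfy ⟨hyu, hy⟩)

end DFSTree.IsDFS

theorem cut_two_tree_edges_ancestor_related_general (t : DFSTree V E) (ht : t.IsDFS)
    (h3 : GraphKConn t.ends 3) (u v : V) (e : E)
    (hu : u ≠ t.root) (hv : v ≠ t.root)
    (hback : ¬ t.IsTreeEdge e)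
    (hcut : IsCutSet t.ends {t.treeEdge u, t.treeEdge v, e}) :
    t.Anc u v ∨ t.Anc v u := by
  by_contra! ⟨huv, hvu⟩
  obtain ⟨a, b, hab⟩ := hcut
  have through_u {x y : V} (hux : t.Anc u x) (hyu : t.Anc y u) :
      Reach t.ends {t.treeEdge u, t.treeEdge v, e} x y :=
    ht.reach_cut_of_anc_of_anc h3 hu hv hback huv hvu hux hyu
  have through_v {x y : V} (hvx : t.Anc v x) (hyv : t.Anc y v) :
      Reach t.ends {t.treeEdge u, t.treeEdge v, e} x y :=
    Set.insert_comm (t.treeEdge v) _ _ ▸ ht.reach_cut_of_anc_of_anc h3 hv hu hback hvu huv hvx hyv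
  refine hab (.of_reach_ends ?_ (ht.conn a b))
  rintro f (rfl | rfl | rfl)
  · simpa only [ht.tree_ends u hu] using through_u .refl (DFSTree.anc_parent hu)
  · simpa only [ht.tree_ends v hv] using through_v .refl (DFSTree.anc_parent hv)
  · by_cases hfu : f ∈ t.B u
    · exact through_u hfu.2.1 hfu.2.2.1
    by_cases hfv : f ∈ t.B v
    · exact through_v hfv.2.1 hfv.2.2.1
    exact ht.reach_cut_of_anc hu hv hback (ht.back f hback) (fun h => hfu ⟨hback, h⟩)
      (fun h => hfv ⟨hback, h⟩)

/-- If `{(u, p(u)), (v, p(v)), e}` is a 3-edge cut of a 3-edge-connected graph,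
with `e` a back-edge and `u ≠ v`, then `u` and `v` are related as ancestor and
descendant. -/
theorem cut_two_tree_edges_ancestor_related (t : DFSTree V E) (ht : t.IsDFS)
    (h3 : GraphKConn t.ends 3) (u v : V) (e : E)
    (hu : u ≠ t.root) (hv : v ≠ t.root) (huv : u ≠ v)
    (hback : ¬ t.IsTreeEdge e)
    (hcut : IsCutSet t.ends {t.treeEdge u, t.treeEdge v, e}) :
    t.Anc u v ∨ t.Anc v u :=
  cut_two_tree_edges_ancestor_related_general t ht h3 u v e hu hv hback hcut
end

section
/- Let G be a 3-edge-connected graph with DFS tree T. For a vertex u, let V(u) be the set of ancestors v of u such that B(v) = B(u) ⊔ {e} for some back-edge e. Then for distinct vertices u ≠ u', V(u) ∩ V(u') = ∅. -/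
variable {V E : Type}

/-!
A vertex `v ∈ V(u) ∩ V(u')` has `B(v) = B(u) ⊔ {e} = B(u') ⊔ {e'}`. If `e = e'` then
`B(u) = B(u')`, which forces `u = u'` in a 3-edge-connected graph: otherwise the two tree
edges above `u` and `u'` cut the vertices between them off from the rest. If `e ≠ e'`,
then `e ∈ B(u')` and `e' ∈ B(u)`; comparable `u`, `u'` would put `e` into `B(u)` or `e'` into
`B(u')`, and for incomparable `u`, `u'` the sets `B(u)` and `B(u')` are disjoint, so
`B(u) ⊆ {e'}` and the tree edge of `u` together with `e'` is a cut of size two.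
-/

def IsolatedBy (ends : E → V × V) (S : Set E) (R : Set V) : Prop :=
  ∀ f ∉ S, ((ends f).1 ∈ R ↔ (ends f).2 ∈ R)

namespace IsolatedBy

variable {ends : E → V × V} {S S' : Set E} {R : Set V}

lemma mono (h : IsolatedBy ends S R) (hS : S ⊆ S') : IsolatedBy ends S' R :=
  fun f hf => h f (fun hfS => hf (hS hfS))

lemma mem_of_reach (h : IsolatedBy ends S R) {a b : V} (hab : Reach ends S a b)
    (ha : a ∈ R) : b ∈ R := by
  induction hab with
  | refl => exact ha
  | tail _ step ih =>
    obtain ⟨f, hfS, hf | hf⟩ := step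
    · simpa [hf] using (h f hfS).mp (by simpa [hf] using ih)
    · simpa [hf] using (h f hfS).mpr (by simpa [hf] using ih)

lemma eq_univ {k : ℕ} (hk : GraphKConn ends k) {S : Finset E} (hS : S.card < k)
    (h : IsolatedBy ends S R) {a : V} (ha : a ∈ R) (b : V) : b ∈ R :=
  h.mem_of_reach (hk S hS a b) ha

end IsolatedBy

namespace DFSTree

variable {t : DFSTree V E}

lemma anc_refl (a : V) : t.Anc a a := Relation.ReflTransGen.refl

lemma anc_trans {a b c : V} (h1 : t.Anc a b) (h2 : t.Anc b c) : t.Anc a c :=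
  Relation.ReflTransGen.trans h2 h1

lemma anc_parent_s9 {b : V} (hb : b ≠ t.root) : t.Anc (t.parent b) b :=
  Relation.ReflTransGen.single ⟨hb, rfl⟩

lemma anc_antisymm (ht : t.IsDFS) {a b : V} (h1 : t.Anc a b) (h2 : t.Anc b a) : a = b :=
  ht.pre_inj (le_antisymm (ht.pre_mono a b h1) (ht.pre_mono b a h2))

lemma ne_root_and_anc_parent_of_anc {a b : V} (h : t.Anc a b) (hne : a ≠ b) :
    b ≠ t.root ∧ t.Anc a (t.parent b) := by
  rcases Relation.ReflTransGen.cases_head h with h' | ⟨c, ⟨hb, rfl⟩, h'⟩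
  · exact absurd h'.symm hne
  · exact ⟨hb, h'⟩

lemma eq_root_of_anc_root {a : V} (h : t.Anc a t.root) : a = t.root :=
  by_contra fun hne => (ne_root_and_anc_parent_of_anc h hne).1 rfl

lemma anc_total_of_anc {a b x : V} (ha : t.Anc a x) (hb : t.Anc b x) :
    t.Anc a b ∨ t.Anc b a := by
  induction ha with
  | refl => exact Or.inr hb
  | @tail c d _ step ih =>
    obtain ⟨hc, rfl⟩ := step
    rcases ih with h | h
    · exact Or.inl (anc_trans (anc_parent_s9 hc) h)
    · by_cases hbc : b = c
      · subst hbc; exact Or.inl (anc_parent_s9 hc)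
      · exact Or.inr (ne_root_and_anc_parent_of_anc h hbc).2

lemma not_anc_of_properAnc (ht : t.IsDFS) {a b : V} (h : t.ProperAnc a b) : ¬ t.Anc b a :=
  fun hba => h.2 (anc_antisymm ht h.1 hba)

lemma isolatedBy_subtree (ht : t.IsDFS) (u : V) :
    IsolatedBy t.ends (insert (t.treeEdge u) (t.B u)) {x | t.Anc u x} := by
  intro f hf
  simp only [Set.mem_insert_iff, not_or] at hf
  show t.Anc u (t.ends f).1 ↔ t.Anc u (t.ends f).2
  by_cases hT : t.IsTreeEdge f
  · obtain ⟨w, hw, rfl⟩ := hT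
    have hwu : u ≠ w := by rintro rfl; exact hf.1 rfl
    rw [ht.tree_ends w hw]
    exact ⟨fun h => (ne_root_and_anc_parent_of_anc h hwu).2,
      fun h => anc_trans h (anc_parent_s9 hw)⟩
  · have hback := ht.back f hT
    refine ⟨fun hux => ?_, fun huy => anc_trans huy hback⟩
    rcases anc_total_of_anc hux hback with h | h
    · exact h
    · by_contra hyu
      exact hf.2 ⟨hT, hux, h, fun h' => hyu (by rw [h']; exact anc_refl u)⟩

theorem nontrivial_B (ht : t.IsDFS) (h3 : GraphKConn t.ends 3) {u : V} (hu : u ≠ t.root) :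
    (t.B u).Nontrivial := by
  classical
  by_contra hB
  obtain ⟨s, hs, hBs⟩ : ∃ s : Finset E, s.card ≤ 1 ∧ t.B u ⊆ s := by
    rcases (Set.not_nontrivial_iff.mp hB).eq_empty_or_singleton with h | ⟨x, h⟩
    · exact ⟨∅, by simp, by simp [h]⟩
    · exact ⟨{x}, by simp, by simp [h]⟩
  have hcard : (insert (t.treeEdge u) s).card < 3 := by
    have := Finset.card_insert_le (t.treeEdge u) s
    omega
  have hiso : IsolatedBy t.ends ↑(insert (t.treeEdge u) s) {x | t.Anc u x} :=
    (isolatedBy_subtree ht u).mono (by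
      rw [Finset.coe_insert]; exact Set.insert_subset_insert hBs)
  exact hu (eq_root_of_anc_root (hiso.eq_univ h3 hcard (anc_refl u) t.root))

theorem eq_of_anc_of_B_eq (ht : t.IsDFS) (h3 : GraphKConn t.ends 3) {u u' : V}
    (hanc : t.Anc u u') (hB : t.B u = t.B u') : u = u' := by
  classical
  by_contra hne
  let R : Set V := {x | t.Anc u x ∧ ¬ t.Anc u' x}
  have hiso : IsolatedBy t.ends ↑({t.treeEdge u, t.treeEdge u'} : Finset E) R := by
    intro f hf
    simp only [Finset.coe_insert, Finset.coe_singleton, Set.mem_insert_iff,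
      Set.mem_singleton_iff, not_or] at hf
    by_cases hfB : f ∈ t.B u
    · have hfB' : f ∈ t.B u' := hB ▸ hfB
      exact iff_of_false (fun h => h.2 hfB'.2.1)
        (fun h => not_anc_of_properAnc ht hfB.2.2 h.1)
    · have hsub := isolatedBy_subtree ht u f (by simp [hf.1, hfB])
      have hsub' := isolatedBy_subtree ht u' f (by simp [hf.2, ← hB, hfB])
      exact and_congr hsub (not_congr hsub')
  have hcard : ({t.treeEdge u, t.treeEdge u'} : Finset E).card < 3 :=
    (Finset.card_le_two).trans_lt (by norm_num)
  exact (hiso.eq_univ h3 hcard ⟨anc_refl u, fun h => hne (anc_antisymm ht hanc h)⟩ u').2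
    (anc_refl u')

theorem eq_of_B_eq (ht : t.IsDFS) (h3 : GraphKConn t.ends 3) {u u' : V} (hu : u ≠ t.root)
    (hB : t.B u = t.B u') : u = u' := by
  obtain ⟨f, hf⟩ := (nontrivial_B ht h3 hu).nonempty
  have hf' : f ∈ t.B u' := hB ▸ hf
  rcases anc_total_of_anc hf.2.1 hf'.2.1 with h | h
  · exact eq_of_anc_of_B_eq ht h3 h hB
  · exact (eq_of_anc_of_B_eq ht h3 h hB.symm).symm

lemma mem_B_of_anc_of_anc (ht : t.IsDFS) {v u w : V} {f : E} (hvu : t.Anc v u)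
    (huw : t.Anc u w) (hfv : f ∈ t.B v) (hfw : f ∈ t.B w) : f ∈ t.B u := by
  refine ⟨hfw.1, anc_trans huw hfw.2.1, anc_trans hfv.2.2.1 hvu, fun hyu => ?_⟩
  exact not_anc_of_properAnc ht hfv.2.2 (hyu ▸ hvu)

end DFSTree

open DFSTree in
/-- Let `V(u)` be the set of ancestors `v` of `u` with `B(v) = B(u) ⊔ {e}` for
some back-edge `e`. Then `V(u)` and `V(u')` are disjoint for `u ≠ u'`. -/
theorem Vsets_disjoint (t : DFSTree V E) (ht : t.IsDFS)
    (h3 : GraphKConn t.ends 3) (u u' : V) (hne : u ≠ u') :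
    {v | t.Anc v u ∧ ∃ e, t.B v = insert e (t.B u) ∧ e ∉ t.B u} ∩
      {v | t.Anc v u' ∧ ∃ e, t.B v = insert e (t.B u') ∧ e ∉ t.B u'} = ∅ := by
  rw [Set.eq_empty_iff_forall_notMem]
  rintro v ⟨⟨hvu, e, hBv, he⟩, ⟨hvu', e', hBv', he'⟩⟩
  have hev : e ∈ t.B v := hBv ▸ Set.mem_insert e (t.B u)
  have he'v : e' ∈ t.B v := hBv' ▸ Set.mem_insert e' (t.B u')
  have hu : u ≠ t.root := (ne_root_and_anc_parent_of_anc hvu (by rintro rfl; exact he hev)).1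
  by_cases hee : e = e'
  · subst hee
    refine hne (eq_of_B_eq ht h3 hu ?_)
    rw [← Set.insert_sdiff_self_of_notMem he, ← Set.insert_sdiff_self_of_notMem he', ← hBv, hBv']
  have heu' : e ∈ t.B u' := (Set.mem_insert_iff.mp (hBv' ▸ hev)).resolve_left hee
  have he'u : e' ∈ t.B u := (Set.mem_insert_iff.mp (hBv ▸ he'v)).resolve_left (Ne.symm hee)
  by_cases huu' : t.Anc u u'
  · exact he (mem_B_of_anc_of_anc ht hvu huu' hev heu')
  by_cases hu'u : t.Anc u' u
  · exact he' (mem_B_of_anc_of_anc ht hvu' hu'u he'v he'u)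
  refine (nontrivial_B ht h3 hu).not_subset_singleton (x := e') fun f hf => ?_
  have hfv : f ∈ insert e' (t.B u') := hBv' ▸ hBv ▸ Set.mem_insert_of_mem e hf
  rcases hfv with rfl | hfu'
  · rfl
  · exact ((anc_total_of_anc hf.2.1 hfu'.2.1).elim huu' hu'u).elim
end
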